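/- Let d : [0,∞) → ℝ be nonnegative, nondecreasing, and locally integrable, let H be a finite set, let f* : H → ℝ with f*_h ≥ 0 for all h, and set r* := ∑_{h∈H} f*_h. For f : H → ℝ with f_h ≥ 0 for all h, define Δ(f) := ∫_0^{∑_h f_h} d(t) dt − ∑_{h∈H} ∫_{r* − f*_h}^{r* − f*_h + f_h} d(t) dt. If either f_h ≥ f*_h for all h ∈ H, or 0 ≤ f_h ≤ f*_h for all h ∈ H, then Δ(f) ≥ Δ(f*). -/
import Mathlib

open Finset MeasureTheory intervalIntegral Set

section Aux

lemma my_intble (d : ℝ → ℝ) (hint : LocallyIntegrableOn d (Set.Ici 0)) {a b : ℝ} (ha : 0 ≤ a) (hab : a ≤ b) :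
    IntervalIntegrable d MeasureTheory.volume a b := by
  have : IntegrableOn d (Set.Icc a b) := by
    exact hint.integrableOn_compact_subset (fun x hx => le_trans ha hx.1) isCompact_Icc
  exact (intervalIntegrable_iff_integrableOn_Icc_of_le hab).2 this

lemma my_shift (d : ℝ → ℝ) (hmono : MonotoneOn d (Set.Ici 0)) (hint : LocallyIntegrableOn d (Set.Ici 0)) {a b l : ℝ} (ha : 0 ≤ a) (hab : a ≤ b) (hl : 0 ≤ l) :
    (∫ t in a..(a+l), d t) ≤ ∫ t in b..(b+l), d t := by
  have key : (∫ t in b..(b+l), d t) = ∫ t in a..(a+l), d (t + (b - a)) := by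
    rw [intervalIntegral.integral_comp_add_right]
    congr 1 <;> ring
  rw [key]
  have hb : (0:ℝ) ≤ b := le_trans ha hab
  refine intervalIntegral.integral_mono_on (by linarith) (my_intble d hint ha (by linarith)) ?_ ?_
  · have h1 : IntervalIntegrable d MeasureTheory.volume b (b + l) :=
      my_intble d hint hb (by linarith)
    have h2 := h1.comp_add_right (b - a)
    rwa [show b - (b - a) = a by ring, show b + l - (b - a) = a + l by ring] at h2
  · intro x hx
    have hx1 := hx.1
    exact hmono (Set.mem_Ici.2 (by linarith)) (Set.mem_Ici.2 (by linarith)) (by linarith)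

lemma my_sup (d : ℝ → ℝ) (hmono : MonotoneOn d (Set.Ici 0)) (hint : LocallyIntegrableOn d (Set.Ici 0)) {H : Type} [Fintype H] (g : H → ℝ) (hg : ∀ h, 0 ≤ g h) {c : ℝ}
    (hc : 0 ≤ c) (s : Finset H) :
    (∑ h ∈ s, ∫ t in c..(c + g h), d t) ≤ ∫ t in c..(c + ∑ h ∈ s, g h), d t := by
  induction s using Finset.cons_induction with
  | empty => simp
  | cons a s has ih =>
    rw [Finset.sum_cons, Finset.sum_cons]
    have hT : 0 ≤ ∑ h ∈ s, g h := Finset.sum_nonneg fun h _ => hg h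
    have h1 : (∫ t in c..(c + g a), d t) ≤ ∫ t in (c + ∑ h ∈ s, g h)..(c + ∑ h ∈ s, g h + g a), d t :=
      my_shift d hmono hint hc (by linarith) (hg a)
    have h2 : (∫ t in c..(c + (g a + ∑ h ∈ s, g h)), d t)
        = (∫ t in c..(c + ∑ h ∈ s, g h), d t) + ∫ t in (c + ∑ h ∈ s, g h)..(c + ∑ h ∈ s, g h + g a), d t := by
      rw [intervalIntegral.integral_add_adjacent_intervals
        (my_intble d hint hc (by linarith)) (my_intble d hint (by linarith) (by linarith [hg a]))]
      congr 1; ring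
    linarith

lemma my_sub (d : ℝ → ℝ) (hmono : MonotoneOn d (Set.Ici 0)) (hint : LocallyIntegrableOn d (Set.Ici 0)) {H : Type} [Fintype H] (g : H → ℝ) (hg : ∀ h, 0 ≤ g h) {c : ℝ}
    (s : Finset H) (hc : ∑ h ∈ s, g h ≤ c) :
    (∫ t in (c - ∑ h ∈ s, g h)..c, d t) ≤ ∑ h ∈ s, ∫ t in (c - g h)..c, d t := by
  induction s using Finset.cons_induction with
  | empty => simp
  | cons a s has ih =>
    rw [Finset.sum_cons] at hc ⊢
    rw [Finset.sum_cons]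
    have hT : 0 ≤ ∑ h ∈ s, g h := Finset.sum_nonneg fun h _ => hg h
    have hga := hg a
    have h2 : (∫ t in (c - (g a + ∑ h ∈ s, g h))..c, d t)
        = (∫ t in (c - (g a + ∑ h ∈ s, g h))..(c - ∑ h ∈ s, g h), d t)
          + ∫ t in (c - ∑ h ∈ s, g h)..c, d t := by
      rw [intervalIntegral.integral_add_adjacent_intervals
        (my_intble d hint (by linarith) (by linarith)) (my_intble d hint (by linarith) (by linarith))]
    have h1 : (∫ t in (c - (g a + ∑ h ∈ s, g h))..(c - ∑ h ∈ s, g h), d t)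
        ≤ ∫ t in (c - g a)..c, d t := by
      have := my_shift d hmono hint (a := c - (g a + ∑ h ∈ s, g h)) (b := c - g a) (l := g a)
        (by linarith) (by linarith) hga
      convert this using 2 <;> ring
    exact h2 ▸ by linarith [ih (by linarith)]

end Aux

/-- For a nonnegative nondecreasing locally integrable `d`, the function
`Δ(f) = ∫_0^{∑ f_h} d − ∑_h ∫_{r*−f*_h}^{r*−f*_h+f_h} d` is minimized at `f*` within the
region where `f ≥ f*` coordinatewise or `f ≤ f*` coordinatewise. -/
theorem delta_minimized_at_fstar
    (H : Type) [Fintype H] (d : ℝ → ℝ)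
    (hd0 : ∀ t ∈ Set.Ici (0:ℝ), 0 ≤ d t)
    (hmono : MonotoneOn d (Set.Ici 0))
    (hint : LocallyIntegrableOn d (Set.Ici 0))
    (fstar f : H → ℝ)
    (hfs : ∀ h, 0 ≤ fstar h) (hf : ∀ h, 0 ≤ f h)
    (hcase : (∀ h, fstar h ≤ f h) ∨ (∀ h, f h ≤ fstar h)) :
    (∫ t in (0:ℝ)..(∑ h, fstar h), d t) -
      (∑ h, ∫ t in ((∑ h', fstar h') - fstar h)..((∑ h', fstar h') - fstar h + fstar h), d t) ≤
    (∫ t in (0:ℝ)..(∑ h, f h), d t) -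
      ∑ h, ∫ t in ((∑ h', fstar h') - fstar h)..((∑ h', fstar h') - fstar h + f h), d t := by
  set r : ℝ := ∑ h', fstar h' with hr
  have hr0 : 0 ≤ r := Finset.sum_nonneg fun h _ => hfs h
  have hrh : ∀ h : H, fstar h ≤ r := fun h =>
    Finset.single_le_sum (fun h _ => hfs h) (Finset.mem_univ h)
  rcases hcase with hca | hca
  · -- f ≥ fstar
    set g : H → ℝ := fun h => f h - fstar h with hgdef
    have hg : ∀ h, 0 ≤ g h := fun h => by simp [hgdef]; linarith [hca h]
    have hS : (∑ h, f h) = r + ∑ h, g h := by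
      simp only [hgdef, hr]; rw [← Finset.sum_add_distrib]; congr 1; ext h; ring
    have hgT : 0 ≤ ∑ h, g h := Finset.sum_nonneg fun h _ => hg h
    have split1 : (∫ t in (0:ℝ)..(∑ h, f h), d t)
        = (∫ t in (0:ℝ)..r, d t) + ∫ t in r..(r + ∑ h, g h), d t := by
      rw [hS, intervalIntegral.integral_add_adjacent_intervals
        (my_intble d hint le_rfl hr0) (my_intble d hint hr0 (by linarith))]
    have split2 : ∀ h : H, (∫ t in (r - fstar h)..(r - fstar h + f h), d t)
        = (∫ t in (r - fstar h)..(r - fstar h + fstar h), d t) + ∫ t in r..(r + g h), d t := by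
      intro h
      have e1 : r - fstar h + fstar h = r := by ring
      have e2 : r - fstar h + f h = r + g h := by simp [hgdef]; ring
      rw [e1, e2, intervalIntegral.integral_add_adjacent_intervals
        (my_intble d hint (by linarith [hrh h, hfs h]) (by linarith [hfs h]))
        (my_intble d hint hr0 (by linarith [hg h]))]
    have key := my_sup d hmono hint g hg hr0 Finset.univ
    rw [split1]
    simp only [split2, Finset.sum_add_distrib]
    linarith
  · -- f ≤ fstar
    set g : H → ℝ := fun h => fstar h - f h with hgdef
    have hg : ∀ h, 0 ≤ g h := fun h => by simp [hgdef]; linarith [hca h]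
    have hS : (∑ h, f h) = r - ∑ h, g h := by
      simp only [hgdef, hr]; rw [← Finset.sum_sub_distrib]; congr 1; ext h; ring
    have hgT : 0 ≤ ∑ h, g h := Finset.sum_nonneg fun h _ => hg h
    have hS0 : 0 ≤ r - ∑ h, g h := by rw [← hS]; exact Finset.sum_nonneg fun h _ => hf h
    have split1 : (∫ t in (0:ℝ)..r, d t)
        = (∫ t in (0:ℝ)..(∑ h, f h), d t) + ∫ t in (r - ∑ h, g h)..r, d t := by
      rw [hS, intervalIntegral.integral_add_adjacent_intervals
        (my_intble d hint le_rfl hS0) (my_intble d hint hS0 (by linarith))]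
    have split2 : ∀ h : H, (∫ t in (r - fstar h)..(r - fstar h + fstar h), d t)
        = (∫ t in (r - fstar h)..(r - fstar h + f h), d t) + ∫ t in (r - g h)..r, d t := by
      intro h
      have e1 : r - fstar h + f h = r - g h := by simp [hgdef]; ring
      have e2 : r - fstar h + fstar h = r := by ring
      have hsplit : (∫ t in (r - fstar h)..r, d t)
          = (∫ t in (r - fstar h)..(r - g h), d t) + ∫ t in (r - g h)..r, d t :=
        (intervalIntegral.integral_add_adjacent_intervals
          (my_intble d hint (by linarith [hrh h, hfs h, hf h, hg h]) (by linarith [hf h, hg h]))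
          (my_intble d hint (by linarith [hrh h, hg h, hf h]) (by linarith [hg h]))).symm
      rw [e1, e2, hsplit]
    have key := my_sub d hmono hint g hg (c := r) Finset.univ (by linarith)
    rw [split1]
    simp only [split2, Finset.sum_add_distrib]
    linarith
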